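/- If A and B are l-regular languages over Σ, then their intersection A ∧ B, defined by (A ∧ B)(ω) = A(ω) ∧ B(ω), is an l-regular language. -/

import Mathlib

/-- A complete orthomodular lattice. -/
class OrthomodularCompleteLattice (α : Type*) extends CompleteLattice α, Compl α where
  inf_compl_self : ∀ a : α, a ⊓ aᶜ = ⊥
  sup_compl_self : ∀ a : α, a ⊔ aᶜ = ⊤
  compl_compl' : ∀ a : α, aᶜᶜ = a
  compl_antitone : ∀ a b : α, a ≤ b → bᶜ ≤ aᶜ
  orthomodular : ∀ a b : α, a ≤ b → b = a ⊔ (aᶜ ⊓ b)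

/-- An `l`-valued finite automaton (`l`-VFA). -/
structure LVFA (Q A l : Type*) where
  δ : Q → A → Q → l
  init : Q → l
  final : Q → l

/-- The `l`-valued language recognized by an `l`-VFA. -/
def lvfaLang {Q A l : Type*} [OrthomodularCompleteLattice l] (M : LVFA Q A l)
    (w : List A) : l :=
  ⨆ path : Fin (w.length + 1) → Q,
    M.init (path 0) ⊓
      (⨅ i : Fin w.length, M.δ (path i.castSucc) (w.get i) (path i.succ)) ⊓
      M.final (path (Fin.last w.length))

/-- An `l`-valued deterministic finite automaton (`l`-VDFA). -/
structure LVDFA (Q A l : Type*) where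
  next : Q → A → Q
  start : Q
  final : Q → l

/-- The `l`-valued language recognized by an `l`-VDFA. -/
def lvdfaLang {Q A l : Type*} (M : LVDFA Q A l) (w : List A) : l :=
  M.final (w.foldl M.next M.start)

/-- An `l`-valued finite automaton with ε-moves (`ε` is encoded as `none`). -/
structure LVFAe (Q A l : Type*) where
  δ : Q → Option A → Q → l
  init : Q → l
  final : Q → l

/-- The `l`-valued language recognized by an `l`-VFA with ε-moves. -/
def lvfaeLang {Q A l : Type*} [OrthomodularCompleteLattice l] (M : LVFAe Q A l)
    (w : List A) : l :=
  ⨆ n : ℕ, ⨆ τ : Fin n → Option A, ⨆ _ : (List.ofFn τ).reduceOption = w,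
    ⨆ path : Fin (n + 1) → Q,
      M.init (path 0) ⊓
        (⨅ i : Fin n, M.δ (path i.castSucc) (τ i) (path i.succ)) ⊓
        M.final (path (Fin.last n))

/-- An `l`-valued language is `l`-regular if it is recognized by some `l`-VFA. -/
def IsLRegular {A l : Type*} [OrthomodularCompleteLattice l] (f : List A → l) : Prop :=
  ∃ (Q : Type) (_ : Fintype Q) (M : LVFA Q A l), ∀ w, lvfaLang M w = f w

/-! The product of two `l`-VFAs assigns to a word the supremum, over pairs of runs, of the meet
of their weights; this need not be the meet of the two suprema, since an orthomodular lattice is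
not distributive. Determinizing first avoids the problem: a deterministic automaton has a single
run, so the product of two of them recognizes the intersection. The determinization keeps, for
every run read so far, its initial state, its current state and the set of transitions it used;
a set suffices because `⊓` is idempotent and commutative, and the value of a run is only taken,
as a supremum over all of them, at the end. -/

def pathTrace {Q A : Type*} (w : List A) (p : Fin (w.length + 1) → Q) : Set (Q × A × Q) :=
  Set.range fun i : Fin w.length => (p i.castSucc, w.get i, p i.succ)

@[simp]
lemma pathTrace_nil {Q A : Type*} (p : Fin 1 → Q) : pathTrace ([] : List A) p = ∅ := by
  simp [pathTrace]

lemma pathTrace_cons {Q A : Type*} (a : A) (w : List A) (q : Q) (p : Fin (w.length + 1) → Q) :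
    pathTrace (a :: w) (Fin.cons q p : Fin (w.length + 2) → Q) =
      insert (q, a, p 0) (pathTrace w p) := by
  rw [pathTrace, pathTrace, ← Fin.range_cons]
  congr 1
  funext i
  exact Fin.cases rfl (fun _ => rfl) i

namespace LVDFA

variable {Q Q' A l : Type*}

def prod [Min l] {Q₁ Q₂ : Type*} (D₁ : LVDFA Q₁ A l) (D₂ : LVDFA Q₂ A l) :
    LVDFA (Q₁ × Q₂) A l where
  next p a := (D₁.next p.1 a, D₂.next p.2 a)
  start := (D₁.start, D₂.start)
  final p := D₁.final p.1 ⊓ D₂.final p.2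

lemma lvdfaLang_prod [Min l] {Q₁ Q₂ : Type*} (D₁ : LVDFA Q₁ A l) (D₂ : LVDFA Q₂ A l)
    (w : List A) : lvdfaLang (D₁.prod D₂) w = lvdfaLang D₁ w ⊓ lvdfaLang D₂ w := by
  have foldl_next : ∀ (w : List A) (s : Q₁ × Q₂),
      w.foldl (D₁.prod D₂).next s = (w.foldl D₁.next s.1, w.foldl D₂.next s.2) := by
    intro w
    induction w with
    | nil => exact fun _ => rfl
    | cons a w ih => exact fun s => ih _
  rw [lvdfaLang, foldl_next]
  rfl

def equivStates (e : Q ≃ Q') (D : LVDFA Q A l) : LVDFA Q' A l where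
  next q a := e (D.next (e.symm q) a)
  start := e D.start
  final q := D.final (e.symm q)

lemma lvdfaLang_equivStates (e : Q ≃ Q') (D : LVDFA Q A l) (w : List A) :
    lvdfaLang (D.equivStates e) w = lvdfaLang D w := by
  have foldl_next : ∀ (w : List A) (q : Q),
      w.foldl (D.equivStates e).next (e q) = e (w.foldl D.next q) := by
    intro w
    induction w with
    | nil => exact fun _ => rfl
    | cons a w ih =>
      intro q
      show w.foldl _ (e (D.next (e.symm (e q)) a)) = _
      rw [e.symm_apply_apply, ih]
      rfl
  show D.final (e.symm (w.foldl _ (e D.start))) = _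
  rw [foldl_next, e.symm_apply_apply]
  rfl

def run (D : LVDFA Q A l) (w : List A) (j : Fin (w.length + 1)) : Q :=
  (w.take j).foldl D.next D.start

variable (D : LVDFA Q A l) (w : List A)

@[simp]
lemma run_zero : D.run w 0 = D.start := by
  simp [run]

@[simp]
lemma run_last : D.run w (Fin.last w.length) = w.foldl D.next D.start := by
  simp [run]

lemma next_run (i : Fin w.length) : D.next (D.run w i.castSucc) (w.get i) = D.run w i.succ := by
  simp only [run, Fin.val_castSucc, Fin.val_succ, List.take_add_one, List.get_eq_getElem,
    List.getElem?_eq_getElem i.isLt, Option.toList_some, List.foldl_append, List.foldl_cons,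
    List.foldl_nil]

lemma eq_run_of_isRun {p : Fin (w.length + 1) → Q} (h₀ : p 0 = D.start)
    (hnext : ∀ i, D.next (p i.castSucc) (w.get i) = p i.succ) : p = D.run w := by
  funext j
  induction j using Fin.induction with
  | zero => rw [h₀, run_zero]
  | succ i ih => rw [← hnext, ← next_run, ih]

def toLVFA [DecidableEq Q] [Top l] [Bot l] (D : LVDFA Q A l) : LVFA Q A l where
  δ q a q' := if D.next q a = q' then ⊤ else ⊥
  init q := if q = D.start then ⊤ else ⊥
  final := D.final

lemma lvfaLang_toLVFA [DecidableEq Q] [OrthomodularCompleteLattice l] :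
    lvfaLang D.toLVFA w = lvdfaLang D w := by
  apply le_antisymm
  · refine iSup_le fun p => ?_
    by_cases hrun : p 0 = D.start ∧ ∀ i, D.next (p i.castSucc) (w.get i) = p i.succ
    · rw [eq_run_of_isRun D w hrun.1 hrun.2, run_last]
      exact inf_le_right
    · refine inf_le_left.trans (le_of_eq ?_) |>.trans bot_le
      rcases not_and_or.mp hrun with h₀ | hnext
      · simp [toLVFA, h₀]
      · obtain ⟨i, hi⟩ := not_forall.mp hnext
        exact eq_bot_iff.mpr <| inf_le_right.trans <| (iInf_le _ i).trans (le_of_eq (if_neg hi))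
  · refine le_iSup_of_le (D.run w) ?_
    simp only [toLVFA, run_zero, next_run, if_true, iInf_top, top_inf_eq, run_last, lvdfaLang,
      le_refl]

theorem isLRegular_lvdfaLang [Finite Q] [OrthomodularCompleteLattice l] :
    IsLRegular (lvdfaLang D) := by
  obtain ⟨n, ⟨e⟩⟩ := Finite.exists_equiv_fin Q
  exact ⟨Fin n, inferInstance, (D.equivStates e).toLVFA, fun w => by
    rw [lvfaLang_toLVFA, lvdfaLang_equivStates]⟩

end LVDFA

namespace LVFA

def determinize {Q A l : Type*} [CompleteLattice l] (M : LVFA Q A l) :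
    LVDFA (Set (Q × Q × Set (Q × A × Q))) A l where
  next X a := {d | ∃ c ∈ X, ∃ q, d = (c.1, q, insert (c.2.1, a, q) c.2.2)}
  start := Set.range fun q => (q, q, ∅)
  final X := ⨆ c ∈ X, M.init c.1 ⊓ (⨅ t ∈ c.2.2, M.δ t.1 t.2.1 t.2.2) ⊓ M.final c.2.1

section

variable {Q A l : Type*} [CompleteLattice l] (M : LVFA Q A l)

lemma foldl_determinize_next (w : List A) (X : Set (Q × Q × Set (Q × A × Q))) :
    w.foldl M.determinize.next X =
      {d | ∃ c ∈ X, ∃ p : Fin (w.length + 1) → Q, p 0 = c.2.1 ∧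
        d = (c.1, p (Fin.last w.length), c.2.2 ∪ pathTrace w p)} := by
  induction w generalizing X with
  | nil =>
    ext d
    constructor
    · intro hd
      exact ⟨d, hd, fun _ => d.2.1, rfl, by simp⟩
    · rintro ⟨c, hc, p, hp, rfl⟩
      simpa [hp] using hc
  | cons a w ih =>
    rw [List.foldl_cons, ih]
    ext d
    simp only [Set.mem_ofPred_eq, List.length_cons, Fin.exists_fin_succ_pi (n := w.length + 1),
      Fin.cons_zero, ← Fin.succ_last, Fin.cons_succ, pathTrace_cons]
    constructor
    · rintro ⟨_, ⟨c, hc, q, rfl⟩, p, hp, rfl⟩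
      refine ⟨c, hc, c.2.1, p, rfl, ?_⟩
      rw [hp, Set.insert_union, Set.union_insert]
    · rintro ⟨c, hc, _, p, rfl, rfl⟩
      refine ⟨_, ⟨c, hc, p 0, rfl⟩, p, rfl, ?_⟩
      rw [Set.insert_union, Set.union_insert]

lemma foldl_determinize_start (w : List A) :
    w.foldl M.determinize.next M.determinize.start =
      Set.range fun p : Fin (w.length + 1) → Q => (p 0, p (Fin.last w.length), pathTrace w p) := by
  rw [foldl_determinize_next]
  ext d
  constructor
  · rintro ⟨_, ⟨q, rfl⟩, p, hp, rfl⟩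
    exact ⟨p, by simp [hp]⟩
  · rintro ⟨p, rfl⟩
    exact ⟨_, ⟨p 0, rfl⟩, p, rfl, by simp⟩

end

lemma lvdfaLang_determinize {Q A l : Type*} [OrthomodularCompleteLattice l] (M : LVFA Q A l)
    (w : List A) : lvdfaLang M.determinize w = lvfaLang M w := by
  rw [lvdfaLang, foldl_determinize_start, lvfaLang]
  dsimp only [determinize]
  rw [iSup_range]
  refine iSup_congr fun p => ?_
  rw [pathTrace, iInf_range]

end LVFA

/-- `l`-regular languages are closed under intersection. -/
theorem lregular_inter {l A : Type*} [OrthomodularCompleteLattice l] [Fintype A]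
    (f g : List A → l) (hf : IsLRegular f) (hg : IsLRegular g) :
    IsLRegular (fun w => f w ⊓ g w) := by
  obtain ⟨Q₁, _, M₁, hM₁⟩ := hf
  obtain ⟨Q₂, _, M₂, hM₂⟩ := hg
  convert (M₁.determinize.prod M₂.determinize).isLRegular_lvdfaLang using 2 with w
  rw [LVDFA.lvdfaLang_prod, LVFA.lvdfaLang_determinize, LVFA.lvdfaLang_determinize, hM₁, hM₂]
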